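/- (Relation 2) Let I ⊆ V be an admissible subset with |I| = n, and let b ∈ V be such that b ∉ I and b̄ ∉ I. Then, as functions V → R (operations pointwise), ∏_{i∈I}(1 − M_i) = Δ_{V∖(I∪{b})} + M_b · Δ_{V∖(I∪{b̄})}. -/

import Mathlib

noncomputable section

/-- Standard basis vector `e_k` of `ℤ^{n+1}` (1-indexed), with `e 0 = 0`. -/
def ee (n k : ℕ) : Fin (n+1) → ℤ := fun t => if (t : ℕ) + 1 = k then 1 else 0

/-- The function `h : V → ℤ^{n+1}`. -/
def hh (n j : ℕ) : Fin (n+1) → ℤ :=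
  if j ≤ n+2 then ee n (j-1) - ee n (n+1) else ee n n - ee n (2*n+2-j)

/-- The Laurent polynomial ring `R = ℤ[y₁^{±1},…,y_{n+1}^{±1}]`. -/
abbrev Rg (n : ℕ) : Type := AddMonoidAlgebra ℤ (Fin (n+1) → ℤ)

/-- The monomial `e^w`. -/
def ex (n : ℕ) (w : Fin (n+1) → ℤ) : Rg n := AddMonoidAlgebra.single w 1

/-- `ī = 2n+3-i`. -/
def bar (n i : ℕ) : ℕ := 2*n+3 - i

/-- Membership in the vertex set `V = {1,…,2n+2}`. -/
def memV (n i : ℕ) : Prop := 1 ≤ i ∧ i ≤ 2*n+2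

/-- The axial function `α(i,j) = h(j) - h(i)`. -/
def axl (n i j : ℕ) : Fin (n+1) → ℤ := hh n j - hh n i

/-- The K-class `M_v`. -/
def Mv (n v : ℕ) (l : ℕ) : Rg n :=
  if l = v then 1
  else if l = bar n v then ex n (ee n n - ee n (n+1) - (2:ℤ) • hh n (bar n v))
  else ex n (hh n v - hh n l)

/-- The pointwise inverse `M_v⁻¹`. -/
def MvInv (n v : ℕ) (l : ℕ) : Rg n :=
  if l = v then 1
  else if l = bar n v then ex n (-(ee n n - ee n (n+1) - (2:ℤ) • hh n (bar n v)))
  else ex n (hh n l - hh n v)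

/-- A subset `P ⊆ V` is admissible if it is nonempty and contains no pair `{i, ī}`. -/
def admissible (n : ℕ) (P : Finset ℕ) : Prop :=
  P.Nonempty ∧ (∀ i ∈ P, memV n i) ∧ (∀ i ∈ P, bar n i ∉ P)

/-- The vertex set as a finset. -/
def Vfin (n : ℕ) : Finset ℕ := Finset.Icc 1 (2*n+2)

/-- The Thom class `Δ_P`. -/
def Dl (n : ℕ) (P : Finset ℕ) (l : ℕ) : Rg n :=
  if l ∈ P then
    ∏ k ∈ (Vfin n).filter (fun k => k ∉ P ∧ k ≠ bar n l), (1 - ex n (axl n l k))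
  else 0

/-- `φ : V → R` is a K-class if `1 - e^{α(i,j)}` divides `φ(i) - φ(j)` for every edge `(i,j)`. -/
def isKClass (n : ℕ) (f : ℕ → Rg n) : Prop :=
  ∀ i j : ℕ, memV n i → memV n j → j ≠ i → j ≠ bar n i →
    (1 - ex n (axl n i j)) ∣ (f i - f j)

/-!
Evaluate both sides at a vertex `l`. If `l ∈ I`, the factor `1 - M_l(l)` and both Thom classes
vanish. If `l ∉ I` and `l̄ ∉ I`, then `M_i(l) = e^{α(l,i)}` for every `i ∈ I`, so the left side
is the Thom class of `V ∖ (I ∪ {l̄})` at `l`; this settles `l = b` and `l = b̄`. Every other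
vertex has `l̄ ∈ I`, because the `n` elements of `I` meet all the `n + 1` pairs `{i, ī}` except
`{b, b̄}`. There the two Thom classes share the factor `∏_{k ∈ I ∖ {l̄}} (1 - e^{α(l,k)})`, and
the identity reduces to `1 - M_{l̄}(l) = (1 - e^{α(l,b)}) + e^{α(l,b)} (1 - e^{α(l,b̄)})`, which
holds because `h(b) + h(b̄) = e_n - e_{n+1}` does not depend on `b`.
-/

open Finset

variable {n i j l b : ℕ}

lemma mem_Vfin : i ∈ Vfin n ↔ memV n i := mem_Icc

lemma bar_bar (hi : memV n i) : bar n (bar n i) = i := by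
  obtain ⟨h1, h2⟩ := hi; simp only [bar]; omega

lemma memV_bar (hi : memV n i) : memV n (bar n i) := by
  obtain ⟨h1, h2⟩ := hi; constructor <;> simp only [bar] <;> omega

lemma ne_bar_self (hi : memV n i) : i ≠ bar n i := by
  obtain ⟨h1, h2⟩ := hi; simp only [bar]; omega

lemma eq_bar_iff (hi : memV n i) (hj : memV n j) : i = bar n j ↔ j = bar n i := by
  constructor <;> rintro rfl
  · exact (bar_bar hj).symm
  · exact (bar_bar hi).symm

lemma ex_add (u v : Fin (n+1) → ℤ) : ex n (u + v) = ex n u * ex n v := by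
  simp [ex, AddMonoidAlgebra.single_mul_single]

lemma hh_add_hh_bar (hi : memV n i) : hh n i + hh n (bar n i) = ee n n - ee n (n+1) := by
  obtain ⟨h1, h2⟩ := hi
  funext t
  have ht : (t : ℕ) < n + 1 := t.isLt
  rw [bar]
  simp only [hh, Pi.add_apply]
  by_cases hc1 : i ≤ n+2 <;> by_cases hc2 : 2*n+3-i ≤ n+2 <;>
    simp only [hc1, hc2, if_true, if_false, Pi.sub_apply, ee] <;> split_ifs <;> omega

lemma Mv_self : Mv n i i = 1 := if_pos rfl

lemma Mv_of_ne (hli : l ≠ i) (hlbi : l ≠ bar n i) : Mv n i l = ex n (axl n l i) := by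
  rw [Mv, if_neg hli, if_neg hlbi, axl]

lemma Mv_bar_eq_mul (hl : memV n l) (hb : memV n b) :
    Mv n (bar n l) l = ex n (axl n l b) * ex n (axl n l (bar n b)) := by
  rw [Mv, bar_bar hl, if_neg (ne_bar_self hl), if_pos rfl, ← ex_add, axl, axl,
    ← hh_add_hh_bar hb]
  congr 1
  abel

lemma Dl_compl_of_mem {S : Finset ℕ} (hlS : l ∈ S) : Dl n (Vfin n \ S) l = 0 :=
  if_neg fun h => (mem_sdiff.mp h).2 hlS

lemma Dl_compl_of_notMem {S : Finset ℕ} (hS : S ⊆ Vfin n) (hl : l ∈ Vfin n) (hlS : l ∉ S) :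
    Dl n (Vfin n \ S) l = ∏ k ∈ S.erase (bar n l), (1 - ex n (axl n l k)) := by
  rw [Dl, if_pos (mem_sdiff.mpr ⟨hl, hlS⟩)]
  congr 1
  ext k
  simp only [mem_filter, mem_sdiff, mem_erase, not_and, not_not]
  exact ⟨fun ⟨hk, hkS, hkl⟩ => ⟨hkl, hkS hk⟩, fun ⟨hkl, hkS⟩ => ⟨hS hkS, fun _ => hkS, hkl⟩⟩

lemma prod_one_sub_Mv_of_notMem {S : Finset ℕ} (hS : S ⊆ Vfin n) (hlS : l ∉ S)
    (hlbS : bar n l ∉ S) :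
    ∏ i ∈ S, (1 - Mv n i l) = ∏ k ∈ S, (1 - ex n (axl n l k)) := by
  refine prod_congr rfl fun i hi => ?_
  have hlbi : l ≠ bar n i := fun h => hlbS (by rwa [h, bar_bar (mem_Vfin.mp (hS hi))])
  rw [Mv_of_ne (ne_of_mem_of_not_mem hi hlS).symm hlbi]

lemma prod_one_sub_Mv_eq_Dl {S : Finset ℕ} (hS : S ⊆ Vfin n) (hl : memV n l) (hlS : l ∉ S)
    (hlbS : bar n l ∉ S) :
    ∏ i ∈ S, (1 - Mv n i l) = Dl n (Vfin n \ insert (bar n l) S) l := by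
  have hlS' : l ∉ insert (bar n l) S := by
    simpa only [mem_insert, not_or] using ⟨ne_bar_self hl, hlS⟩
  rw [Dl_compl_of_notMem (insert_subset (mem_Vfin.mpr (memV_bar hl)) hS) (mem_Vfin.mpr hl) hlS',
    erase_insert hlbS, prod_one_sub_Mv_of_notMem hS hlS hlbS]

lemma prod_one_sub_Mv_of_bar_mem {S : Finset ℕ} (hS : S ⊆ Vfin n) (hl : memV n l)
    (hb : memV n b) (hlS : l ∉ S) (hlbS : bar n l ∈ S) (hbS : b ∉ S) (hbbS : bar n b ∉ S)
    (hlb : l ≠ b) (hlbb : l ≠ bar n b) :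
    ∏ i ∈ S, (1 - Mv n i l) =
      Dl n (Vfin n \ insert b S) l + Mv n b l * Dl n (Vfin n \ insert (bar n b) S) l := by
  set P := ∏ k ∈ S.erase (bar n l), (1 - ex n (axl n l k))
  have hbS' : b ∉ S.erase (bar n l) := fun h => hbS (mem_of_mem_erase h)
  have hbbS' : bar n b ∉ S.erase (bar n l) := fun h => hbbS (mem_of_mem_erase h)
  have hbS_ne : b ≠ bar n l := fun h => hlbb ((eq_bar_iff hb hl).mp h)
  have hbbS_ne : bar n b ≠ bar n l := fun h => hlb (by rw [← bar_bar hl, ← h, bar_bar hb])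
  have hlhs : ∏ i ∈ S, (1 - Mv n i l) = (1 - Mv n (bar n l) l) * P := by
    rw [← mul_prod_erase S _ hlbS, prod_one_sub_Mv_of_notMem ((erase_subset _ _).trans hS)
      (fun h => hlS (mem_of_mem_erase h)) (notMem_erase _ _)]
  have hDb : Dl n (Vfin n \ insert b S) l = (1 - ex n (axl n l b)) * P := by
    rw [Dl_compl_of_notMem (insert_subset (mem_Vfin.mpr hb) hS) (mem_Vfin.mpr hl)
      (by simpa only [mem_insert, not_or] using ⟨hlb, hlS⟩), erase_insert_of_ne hbS_ne,
      prod_insert hbS']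
  have hDbb : Dl n (Vfin n \ insert (bar n b) S) l = (1 - ex n (axl n l (bar n b))) * P := by
    rw [Dl_compl_of_notMem (insert_subset (mem_Vfin.mpr (memV_bar hb)) hS) (mem_Vfin.mpr hl)
      (by simpa only [mem_insert, not_or] using ⟨hlbb, hlS⟩), erase_insert_of_ne hbbS_ne,
      prod_insert hbbS']
  rw [hlhs, hDb, hDbb, Mv_of_ne hlb hlbb, Mv_bar_eq_mul hl hb]
  ring

/-- Index in `{1, …, n+1}` of the pair `{i, ī}`. -/
def pairIndex (n i : ℕ) : ℕ := min i (bar n i)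

lemma pairIndex_mem_Icc (hi : memV n i) : pairIndex n i ∈ Icc 1 (n+1) := by
  obtain ⟨h1, h2⟩ := hi; simp only [pairIndex, bar, mem_Icc]; omega

lemma eq_or_eq_bar_of_pairIndex_eq (hi : memV n i) (hj : memV n j)
    (h : pairIndex n i = pairIndex n j) : i = j ∨ i = bar n j := by
  obtain ⟨⟨hi1, hi2⟩, ⟨hj1, hj2⟩⟩ := And.intro hi hj
  simp only [pairIndex, bar] at *; omega

lemma mem_or_bar_mem_of_card_eq {I : Finset ℕ} (hIV : ∀ i ∈ I, memV n i)
    (hadm : ∀ i ∈ I, bar n i ∉ I) (hcard : I.card = n) (hb : memV n b) (hbI : b ∉ I)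
    (hbbI : bar n b ∉ I) (hl : memV n l) (hlb : l ≠ b) (hlbb : l ≠ bar n b) :
    l ∈ I ∨ bar n l ∈ I := by
  have not_pair_b : ∀ i, memV n i → i ≠ b → i ≠ bar n b → pairIndex n i ≠ pairIndex n b :=
    fun i hi h1 h2 h => (eq_or_eq_bar_of_pairIndex_eq hi hb h).elim h1 h2
  have hinj : Set.InjOn (pairIndex n) I := fun i hi j hj h =>
    (eq_or_eq_bar_of_pairIndex_eq (hIV i hi) (hIV j hj) h).resolve_right
      fun hij => hadm j hj (hij ▸ hi)
  have himage : I.image (pairIndex n) = (Icc 1 (n+1)).erase (pairIndex n b) := by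
    refine eq_of_subset_of_card_le (fun x hx => ?_) ?_
    · obtain ⟨i, hi, rfl⟩ := mem_image.mp hx
      exact mem_erase.mpr ⟨not_pair_b i (hIV i hi) (ne_of_mem_of_not_mem hi hbI)
        (ne_of_mem_of_not_mem hi hbbI), pairIndex_mem_Icc (hIV i hi)⟩
    · rw [card_erase_of_mem (pairIndex_mem_Icc hb), Nat.card_Icc, card_image_of_injOn hinj,
        hcard]
      omega
  obtain ⟨i, hi, hil⟩ := mem_image.mp (show pairIndex n l ∈ I.image (pairIndex n) by
    rw [himage]
    exact mem_erase.mpr ⟨not_pair_b l hl hlb hlbb, pairIndex_mem_Icc hl⟩)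
  rcases eq_or_eq_bar_of_pairIndex_eq (hIV i hi) hl hil with rfl | rfl
  · exact Or.inl hi
  · exact Or.inr hi

theorem relation2_general (n : ℕ) (I : Finset ℕ) (hI : admissible n I)
    (hcard : I.card = n) (b : ℕ) (hb : memV n b) (hbI : b ∉ I) (hbbarI : bar n b ∉ I) :
    ∀ l, memV n l →
      ∏ i ∈ I, (1 - Mv n i l) =
        Dl n (Vfin n \ insert b I) l + Mv n b l * Dl n (Vfin n \ insert (bar n b) I) l := by
  obtain ⟨-, hIV, hadm⟩ := hI
  have hsub : I ⊆ Vfin n := fun i hi => mem_Vfin.mpr (hIV i hi)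
  intro l hl
  by_cases hlI : l ∈ I
  · rw [prod_eq_zero hlI (by rw [Mv_self, sub_self]), Dl_compl_of_mem (mem_insert_of_mem hlI),
      Dl_compl_of_mem (mem_insert_of_mem hlI)]
    ring
  rcases eq_or_ne l b with rfl | hlb
  · rw [Dl_compl_of_mem (mem_insert_self _ _), Mv_self,
      prod_one_sub_Mv_eq_Dl hsub hl hlI hbbarI]
    ring
  rcases eq_or_ne l (bar n b) with rfl | hlbb
  · rw [Dl_compl_of_mem (mem_insert_self _ _), prod_one_sub_Mv_eq_Dl hsub hl hlI
      (by rwa [bar_bar hb]), bar_bar hb]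
    ring
  have hlbI : bar n l ∈ I :=
    (mem_or_bar_mem_of_card_eq hIV hadm hcard hb hbI hbbarI hl hlb hlbb).resolve_left hlI
  exact prod_one_sub_Mv_of_bar_mem hsub hl hb hlI hlbI hbI hbbarI hlb hlbb

/-- Relation 2: for admissible `I ⊆ V` with `|I| = n` and `b ∈ V`
with `b, b̄ ∉ I`, one has `∏_{i∈I}(1 - M_i) = Δ_{V∖(I∪{b})} + M_b · Δ_{V∖(I∪{b̄})}`
as functions `V → R`. -/
theorem relation2 (n : ℕ) (hn : 1 ≤ n) (I : Finset ℕ) (hI : admissible n I)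
    (hcard : I.card = n) (b : ℕ) (hb : memV n b) (hbI : b ∉ I) (hbbarI : bar n b ∉ I) :
    ∀ l, memV n l →
      ∏ i ∈ I, (1 - Mv n i l) =
        Dl n (Vfin n \ insert b I) l + Mv n b l * Dl n (Vfin n \ insert (bar n b) I) l :=
  relation2_general n I hI hcard b hb hbI hbbarI
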